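/- arXiv:math/0409549 — 4 statements merged into one kernel-verified Lean document; each statement's English description precedes it below -/
import Mathlib

section
/- Let R be a commutative valuation ring that is self fp-injective. Then for every element a in the maximal ideal P of R, the annihilator (0 : a) is nonzero; consequently P is the only prime ideal when R is in addition archimedean. -/
/-! Extending `r • a ↦ r • m` from the principal submodule generated by a non-zero-divisor `a`
shows that fp-injective modules are divisible by non-zero-divisors. For `M = R` every
non-zero-divisor is then a unit, so the elements of the maximal ideal are zero divisors, and a
self fp-injective domain is a field; hence `⊥` can only be prime when it is the maximal ideal. -/

open IsLocalRing

universe u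

/-- A chain (valuation) ring: ideals are totally ordered by inclusion. -/
def IsChainRing (R : Type u) [CommRing R] : Prop := ∀ I J : Ideal R, I ≤ J ∨ J ≤ I

/-- Archimedean: the maximal ideal is the only nonzero prime ideal. -/
def IsArchimedeanLocal (R : Type u) [CommRing R] [IsLocalRing R] : Prop :=
  ∀ Q : Ideal R, Q.IsPrime → Q ≠ ⊥ → Q = maximalIdeal R

/-- The annihilator ideal `(0 : x)` of a module element. -/
def annOf (R : Type u) {M : Type u} [CommRing R] [AddCommGroup M] [Module R M] (x : M) :
    Ideal R := LinearMap.ker (LinearMap.toSpanSingleton R M x)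

/-- fp-injective (absolutely pure): every homomorphism from a finitely generated
submodule of a finite free module extends; equivalently `Ext¹(F, M) = 0` for every
finitely presented `F`. -/
def IsFpInjective (R M : Type u) [CommRing R] [AddCommGroup M] [Module R M] : Prop :=
  ∀ (n : ℕ) (K : Submodule R (Fin n → R)), K.FG →
    ∀ g : K →ₗ[R] M, ∃ h : (Fin n → R) →ₗ[R] M, ∀ x : K, h x = g x

/-- A coherent ring: every finitely generated ideal is finitely presented. -/
def IsCoherentRing (R : Type u) [CommRing R] : Prop :=
  ∀ I : Ideal R, I.FG → Module.FinitePresentation R ↥I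

/-- An IF-ring: coherent and self fp-injective. -/
def IsIFRing (R : Type u) [CommRing R] : Prop := IsCoherentRing R ∧ IsFpInjective R R

/-- Purity of a submodule: `I·M ⊓ X = I·X` for every finitely generated ideal `I`. -/
def IsPureSubmodule {R M : Type u} [CommRing R] [AddCommGroup M] [Module R M]
    (X : Submodule R M) : Prop :=
  ∀ I : Ideal R, I.FG → (I • (⊤ : Submodule R M)) ⊓ X = I • X

/-- A submodule is uniserial if its submodules are totally ordered by inclusion. -/
def IsUniserialSub {R M : Type u} [CommRing R] [AddCommGroup M] [Module R M]
    (U : Submodule R M) : Prop :=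
  ∀ V W : Submodule R M, V ≤ U → W ≤ U → V ≤ W ∨ W ≤ V

/-- A uniserial module: submodules are totally ordered by inclusion. -/
def IsUniserialMod (R M : Type u) [CommRing R] [AddCommGroup M] [Module R M] : Prop :=
  ∀ V W : Submodule R M, V ≤ W ∨ W ≤ V

/-- A faithful submodule: only `0` annihilates all its elements. -/
def IsFaithfulSub {R M : Type u} [CommRing R] [AddCommGroup M] [Module R M]
    (U : Submodule R M) : Prop := ∀ r : R, (∀ x ∈ U, r • x = 0) → r = 0

/-- A faithful module: its annihilator is zero. -/
def IsFaithfulMod (R M : Type u) [CommRing R] [AddCommGroup M] [Module R M] : Prop :=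
  ∀ r : R, (∀ x : M, r • x = 0) → r = 0

/-- `μ(M)`: the minimal number of generators of a module. -/
noncomputable def mu (R M : Type u) [CommRing R] [AddCommGroup M] [Module R M] : ℕ :=
  sInf {n : ℕ | ∃ s : Finset M, s.card = n ∧ Submodule.span R (s : Set M) = ⊤}

/-- A maximal ring: every family of cosets of ideals with the finite intersection
property has nonempty total intersection. -/
def IsMaximalRing (R : Type u) [CommRing R] : Prop :=
  ∀ (ι : Type u) (a : ι → R) (A : ι → Ideal R),
    (∀ s : Finset ι, ∃ x : R, ∀ i ∈ s, x - a i ∈ A i) → ∃ x : R, ∀ i, x - a i ∈ A i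

/-- Almost maximal: `R/A` is maximal for every nonzero ideal `A`. -/
def IsAlmostMaximalRing (R : Type u) [CommRing R] : Prop :=
  ∀ A : Ideal R, A ≠ ⊥ → IsMaximalRing (R ⧸ A)

/-- A uniform module: any two nonzero submodules intersect nontrivially. -/
def IsUniformMod (R M : Type u) [CommRing R] [AddCommGroup M] [Module R M] : Prop :=
  ∀ N₁ N₂ : Submodule R M, N₁ ≠ ⊥ → N₂ ≠ ⊥ → N₁ ⊓ N₂ ≠ ⊥

/-- Bounded module type with bound `n`: every finitely generated module is a direct
sum of submodules each generated by at most `n` elements. -/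
def HasBoundedModuleType (R : Type u) [CommRing R] (n : ℕ) : Prop :=
  ∀ (M : Type u) [AddCommGroup M] [Module R M], Module.Finite R M →
    ∃ (ι : Type u) (N : ι → Submodule R M),
      iSupIndep N ∧ (⨆ i, N i) = ⊤ ∧
      ∀ i, ∃ s : Finset M, s.card ≤ n ∧ Submodule.span R (s : Set M) = N i

open nonZeroDivisors

theorem IsFpInjective.exists_smul_eq_of_mem_nonZeroDivisors {R M : Type u} [CommRing R]
    [AddCommGroup M] [Module R M] (hM : IsFpInjective R M) {a : R} (ha : a ∈ R⁰) (m : M) :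
    ∃ y : M, a • y = m := by
  set v : Fin 1 → R := a • 1
  set T := LinearMap.toSpanSingleton R (Fin 1 → R) v
  have hT : Function.Injective T := by
    refine (injective_iff_map_eq_zero T).mpr fun r hr => ?_
    refine mem_nonZeroDivisors_iff_right.mp ha r ?_
    simpa [T, v] using congrFun hr 0
  have hKfg : (LinearMap.range T).FG := by
    rw [← LinearMap.span_singleton_eq_range]
    exact Submodule.fg_span_singleton v
  -- `a • 1 ↦ m`, well defined because `r ↦ r • a • 1` is injective
  set e := LinearEquiv.ofInjective T hT
  obtain ⟨h, hh⟩ := hM 1 _ hKfg (LinearMap.toSpanSingleton R M m ∘ₗ e.symm.toLinearMap)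
  refine ⟨h 1, ?_⟩
  have he : (e 1 : Fin 1 → R) = v := by simp [e, T]
  have hv : h v = m := by simpa [he] using hh (e 1)
  rw [← map_smul, hv]

theorem IsFpInjective.isUnit_of_mem_nonZeroDivisors {R : Type u} [CommRing R]
    (hR : IsFpInjective R R) {a : R} (ha : a ∈ R⁰) : IsUnit a :=
  let ⟨y, hy⟩ := hR.exists_smul_eq_of_mem_nonZeroDivisors ha 1
  .of_mul_eq_one y hy

theorem IsFpInjective.isField {R : Type u} [CommRing R] [IsDomain R] (hR : IsFpInjective R R) :
    IsField R where
  exists_pair_ne := exists_pair_ne R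
  mul_comm := mul_comm
  mul_inv_cancel ha :=
    (hR.isUnit_of_mem_nonZeroDivisors (mem_nonZeroDivisors_of_ne_zero ha)).exists_right_inv

theorem IsFpInjective.exists_mul_eq_zero_of_mem_maximalIdeal {R : Type u} [CommRing R]
    [IsLocalRing R] (hR : IsFpInjective R R) {a : R} (ha : a ∈ maximalIdeal R) :
    ∃ r : R, r ≠ 0 ∧ r * a = 0 := by
  obtain ⟨r, hra, hr⟩ := notMem_nonZeroDivisors_iff_right.mp
    fun h => ha (hR.isUnit_of_mem_nonZeroDivisors h)
  exact ⟨r, hr, hra⟩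

theorem stmt0_general (R : Type u) [CommRing R] [IsLocalRing R]
    (hself : IsFpInjective R R) :
    (∀ a ∈ maximalIdeal R, ∃ r : R, r ≠ 0 ∧ r * a = 0) ∧
    (IsArchimedeanLocal R → ∀ Q : Ideal R, Q.IsPrime → Q = maximalIdeal R) := by
  refine ⟨fun _ ha => hself.exists_mul_eq_zero_of_mem_maximalIdeal ha, fun harch Q hQ => ?_⟩
  by_cases hQ0 : Q = ⊥
  · subst hQ0
    have := IsDomain.of_bot_isPrime R
    exact (isField_iff_maximalIdeal_eq.mp hself.isField).symm
  · exact harch Q hQ hQ0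

/-- In a self fp-injective valuation ring, every element of the maximal
ideal has nonzero annihilator; consequently, if `R` is archimedean then the maximal
ideal is the only prime ideal. -/
theorem stmt0 (R : Type u) [CommRing R] [IsLocalRing R]
    (hchain : IsChainRing R) (hself : IsFpInjective R R) :
    (∀ a ∈ maximalIdeal R, ∃ r : R, r ≠ 0 ∧ r * a = 0) ∧
    (IsArchimedeanLocal R → ∀ Q : Ideal R, Q.IsPrime → Q = maximalIdeal R) :=
  stmt0_general R hself
end

section
/- Let R be a non-noetherian archimedean valuation ring that is an IF-ring. Then the maximal ideal P of R is faithful, i.e., its annihilator (0 : P) is zero. -/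
open IsLocalRing

universe u

/-!
If `r ≠ 0` kills the maximal ideal `P`, then `P` is the annihilator of `r`, i.e. the kernel of
`R → (r)`. Coherence makes `(r)` finitely presented, so `P` is finitely generated. In an
archimedean local ring `P` is the only nonzero prime, so by Cohen's theorem every ideal is
finitely generated, contradicting non-noetherianity.
-/

variable {R : Type u} [CommRing R]

theorem IsCoherentRing.annOf_fg (hR : IsCoherentRing R) (r : R) : (annOf R r).FG := by
  let f : R →ₗ[R] Ideal.span {r} :=
    (LinearMap.toSpanSingleton R R r).codRestrict _ fun x ↦ Ideal.mem_span_singleton'.mpr ⟨x, rfl⟩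
  have hf : Function.Surjective f := by
    rintro ⟨y, hy⟩
    obtain ⟨c, rfl⟩ := Ideal.mem_span_singleton'.mp hy
    exact ⟨c, rfl⟩
  have : Module.FinitePresentation R (Ideal.span {r}) := hR _ ⟨{r}, by simp⟩
  have hker := Module.FinitePresentation.fg_ker f hf
  rwa [LinearMap.ker_codRestrict] at hker

theorem annOf_eq_maximalIdeal [IsLocalRing R] {r : R} (hr0 : r ≠ 0)
    (hr : ∀ a ∈ maximalIdeal R, r * a = 0) : annOf R r = maximalIdeal R := by
  refine le_antisymm (fun x hx ↦ ?_) (fun a ha ↦ ?_)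
  · rw [annOf, LinearMap.mem_ker, LinearMap.toSpanSingleton_apply, smul_eq_mul] at hx
    exact fun hunit ↦ hr0 (hunit.mul_right_eq_zero.mp hx)
  · rw [annOf, LinearMap.mem_ker, LinearMap.toSpanSingleton_apply, smul_eq_mul, mul_comm]
    exact hr a ha

theorem IsArchimedeanLocal.isNoetherianRing [IsLocalRing R] (harch : IsArchimedeanLocal R)
    (hP : (maximalIdeal R).FG) : IsNoetherianRing R :=
  .of_prime_ne_bot fun Q hQ hQ0 ↦ harch Q hQ hQ0 ▸ hP

theorem stmt2_general (R : Type u) [CommRing R] [IsLocalRing R]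
    (harch : IsArchimedeanLocal R)
    (hnoeth : ¬ IsNoetherianRing R) (hIF : IsIFRing R) :
    ∀ r : R, (∀ a ∈ maximalIdeal R, r * a = 0) → r = 0 := by
  intro r hr
  by_contra hr0
  refine hnoeth (harch.isNoetherianRing ?_)
  rw [← annOf_eq_maximalIdeal hr0 hr]
  exact hIF.1.annOf_fg r

theorem stmt2 (R : Type u) [CommRing R] [IsLocalRing R]
    (hchain : IsChainRing R) (harch : IsArchimedeanLocal R)
    (hnoeth : ¬ IsNoetherianRing R) (hIF : IsIFRing R) :
    ∀ r : R, (∀ a ∈ maximalIdeal R, r * a = 0) → r = 0 :=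
  stmt2_general R harch hnoeth hIF
end

section
/- Let R be a coherent archimedean valuation ring, Y an injective R-module, and X a pure submodule of Y. Then the quotient Y/X is an injective R-module. -/
open IsLocalRing

universe u

/-!
In an archimedean chain ring every ideal `I` is the union of a chain `(b₀) ⊆ (b₁) ⊆ ⋯` of
principal ideals: otherwise a countable cover of `I` yields a uniform bound producing a nonzero
`a` and a non-unit `t` with `a ∣ tᵏ` and `tᵏ⁺¹ ∣ a`, which is impossible in a local ring.
Given `f : I → Y/X`, coherence makes each annihilator `(0 : bₙ)` principal, so purity and
injectivity of `Y` solve `bₙ • zₙ = f bₙ` in `Y/X`. Purity lifts the `zₙ` to `yₙ ∈ Y` with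
`bₙ • yₙ₊₁ = bₙ • yₙ`; these glue to a map `I → Y`, which extends to `R` by injectivity of `Y`,
and the image of its value at `1` in `Y/X` verifies Baer's criterion for `f`.
-/

theorem mem_annOf {R M : Type u} [CommRing R] [AddCommGroup M] [Module R M] {r : R} {x : M} :
    r ∈ annOf R x ↔ r • x = 0 :=
  Iff.rfl

def Ideal.IsCountableUnionOfPrincipal {R : Type u} [CommRing R] (I : Ideal R) : Prop :=
  ∃ u : ℕ → R, ∀ x, x ∈ I ↔ ∃ n, u n ∣ x

theorem Ideal.exists_mem_ne_zero_of_not_isCountableUnionOfPrincipal {R : Type u} [CommRing R]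
    {I : Ideal R} (hI : ¬ I.IsCountableUnionOfPrincipal) : ∃ a ∈ I, a ≠ 0 := by
  by_contra! h
  refine hI ⟨fun _ => 0, fun x => ⟨fun hx => ⟨0, by rw [h x hx]⟩, ?_⟩⟩
  rintro ⟨_, hx⟩
  rw [zero_dvd_iff.mp hx]
  exact I.zero_mem

theorem exists_pow_succ_dvd_of_forall_exists_sq_dvd {M : Type*} [CommMonoid M] {S : Set M}
    (h : ∀ x ∈ S, ∃ t ∈ S, t ^ 2 ∣ x) (N : ℕ) : ∀ x ∈ S, ∃ t ∈ S, t ^ (N + 1) ∣ x := by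
  induction N with
  | zero => exact fun x hx => ⟨x, hx, by rw [pow_one]⟩
  | succ N ih =>
    intro x hx
    obtain ⟨t, ht, htx⟩ := h x hx
    obtain ⟨s, hs, hst⟩ := ih t ht
    refine ⟨s, hs, dvd_trans ?_ (dvd_trans (pow_dvd_pow_of_dvd hst 2) htx)⟩
    rw [← pow_mul]
    exact pow_dvd_pow s (by omega)

theorem IsLocalRing.eq_zero_of_pow_succ_dvd_of_dvd_pow {R : Type u} [CommRing R] [IsLocalRing R]
    {t a : R} {k : ℕ} (ht : t ∈ maximalIdeal R) (h₁ : t ^ (k + 1) ∣ a) (h₂ : a ∣ t ^ k) :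
    a = 0 := by
  obtain ⟨c, hc⟩ := h₁.trans h₂
  have hunit : IsUnit (1 - t * c) :=
    isUnit_one_sub_self_of_mem_nonunits _ (Ideal.mul_mem_right c _ ht)
  have htk : t ^ k = 0 := hunit.mul_left_eq_zero.mp (by linear_combination hc)
  rwa [pow_succ, htk, zero_mul, zero_dvd_iff] at h₁

namespace IsChainRing

variable {R : Type u} [CommRing R]

theorem dvd_or_dvd (h : IsChainRing R) (a b : R) : a ∣ b ∨ b ∣ a := by
  simpa only [Ideal.span_singleton_le_span_singleton, or_comm] using
    h (Ideal.span {a}) (Ideal.span {b})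

theorem exists_eq_span_singleton_of_fg (h : IsChainRing R) {I : Ideal R} (hI : I.FG) :
    ∃ a, I = Ideal.span {a} := by
  induction I, hI using Submodule.fg_induction with
  | singleton a => exact ⟨a, rfl⟩
  | sup I J _ _ hI hJ =>
    obtain ⟨⟨a, rfl⟩, ⟨b, rfl⟩⟩ := And.intro hI hJ
    rcases h.dvd_or_dvd a b with hab | hba
    · exact ⟨a, sup_eq_left.mpr (Ideal.span_singleton_le_span_singleton.mpr hab)⟩
    · exact ⟨b, sup_eq_right.mpr (Ideal.span_singleton_le_span_singleton.mpr hba)⟩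

theorem isPrime_radical (h : IsChainRing R) {I : Ideal R} (hI : I ≠ ⊤) : I.radical.IsPrime := by
  refine ⟨fun htop => hI (Ideal.radical_eq_top.mp htop), fun {x y} hxy => ?_⟩
  rcases h.dvd_or_dvd x y with ⟨c, rfl⟩ | ⟨c, rfl⟩
  · refine Or.inr (Ideal.mem_radical_of_pow_mem (m := 2) ?_)
    rw [show (x * c) ^ 2 = x * (x * c) * c by ring]
    exact Ideal.mul_mem_right _ _ hxy
  · refine Or.inl (Ideal.mem_radical_of_pow_mem (m := 2) ?_)
    rw [show (y * c) ^ 2 = y * c * y * c by ring]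
    exact Ideal.mul_mem_right _ _ hxy

theorem exists_subset_of_not_isCountableUnionOfPrincipal (h : IsChainRing R) {I : Ideal R}
    (hI : ¬ I.IsCountableUnionOfPrincipal) {S : ℕ → Set R}
    (hS : ∀ n x y, x ∈ S n → x ∣ y → y ∈ S n) (hcover : ∀ x ∈ I, ∃ n, x ∈ S n) :
    ∃ n, ∀ x ∈ I, x ∈ S n := by
  by_contra! hout
  choose u huI huS using hout
  obtain ⟨y, hyI, hy⟩ : ∃ y ∈ I, ∀ n, ¬ u n ∣ y := by
    by_contra! hcof
    exact hI ⟨u, fun x => ⟨hcof x, fun ⟨n, hn⟩ => I.mem_of_dvd hn (huI n)⟩⟩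
  obtain ⟨n, hn⟩ := hcover y hyI
  exact huS n (hS n y (u n) hn ((h.dvd_or_dvd y (u n)).resolve_right (hy n)))

theorem exists_dvd_chain (h : IsChainRing R) {I : Ideal R} (hI : I.IsCountableUnionOfPrincipal) :
    ∃ b : ℕ → R, (∀ n, b (n + 1) ∣ b n) ∧ ∀ x, x ∈ I ↔ ∃ n, b n ∣ x := by
  obtain ⟨u, hu⟩ := hI
  choose b hb using fun n => h.exists_eq_span_singleton_of_fg (I := Ideal.span (u '' Set.Iic n))
    (Submodule.fg_span ((Set.finite_Iic n).image u))
  have hspan : ∀ n, Ideal.span (u '' Set.Iic n) ≤ I := fun n =>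
    Ideal.span_le.mpr (by rintro _ ⟨m, -, rfl⟩; exact (hu _).mpr ⟨m, dvd_rfl⟩)
  refine ⟨b, fun n => ?_, fun x => ⟨fun hx => ?_, fun ⟨n, hn⟩ => ?_⟩⟩
  · rw [← Ideal.span_singleton_le_span_singleton, ← hb, ← hb]
    exact Ideal.span_mono (Set.image_mono (Set.Iic_subset_Iic.mpr n.le_succ))
  · obtain ⟨n, hn⟩ := (hu x).mp hx
    refine ⟨n, dvd_trans ?_ hn⟩
    rw [← Ideal.mem_span_singleton, ← hb]
    exact Ideal.subset_span ⟨n, Set.mem_Iic.mpr le_rfl, rfl⟩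
  · exact I.mem_of_dvd hn (hspan n (hb n ▸ Ideal.mem_span_singleton_self _))

section Local

variable [IsLocalRing R]

theorem exists_dvd_pow (h : IsChainRing R) (harch : IsArchimedeanLocal R) {a x : R} (ha : a ≠ 0)
    (hx : x ∈ maximalIdeal R) : ∃ k, a ∣ x ^ k := by
  by_cases hu : IsUnit a
  · exact ⟨0, hu.dvd⟩
  have hrad : (Ideal.span {a}).radical = maximalIdeal R :=
    harch _ (h.isPrime_radical (mt Ideal.span_singleton_eq_top.mp hu))
      ((Submodule.ne_bot_iff _).mpr ⟨a, Ideal.le_radical (Ideal.mem_span_singleton_self a), ha⟩)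
  obtain ⟨k, hk⟩ : x ∈ (Ideal.span {a}).radical := hrad ▸ hx
  exact ⟨k, Ideal.mem_span_singleton.mp hk⟩

theorem exists_mul_eq_of_not_isCountableUnionOfPrincipal (h : IsChainRing R) {I : Ideal R}
    (hI : ¬ I.IsCountableUnionOfPrincipal) {x : R} (hx : x ∈ I) :
    ∃ s ∈ maximalIdeal R, ∃ y ∈ I, x = s * y := by
  obtain ⟨y, hyI, hxy⟩ : ∃ y ∈ I, ¬ x ∣ y := by
    by_contra! hxI
    exact hI ⟨fun _ => x, fun z => ⟨fun hz => ⟨0, hxI z hz⟩, fun ⟨_, hz⟩ => I.mem_of_dvd hz hx⟩⟩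
  obtain ⟨s, rfl⟩ := (h.dvd_or_dvd x y).resolve_left hxy
  refine ⟨s, ?_, y, hyI, mul_comm y s⟩
  by_contra hs
  exact hxy ((notMem_maximalIdeal.mp hs).mul_right_dvd.mpr dvd_rfl)

theorem maximalIdeal_isCountableUnionOfPrincipal (h : IsChainRing R)
    (harch : IsArchimedeanLocal R) : (maximalIdeal R).IsCountableUnionOfPrincipal := by
  by_contra hm
  obtain ⟨a, ha, ha0⟩ := Ideal.exists_mem_ne_zero_of_not_isCountableUnionOfPrincipal hm
  obtain ⟨n, hn⟩ := h.exists_subset_of_not_isCountableUnionOfPrincipal hm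
    (S := fun n => {x | a ∣ x ^ n}) (fun n x y hx hxy => dvd_trans hx (pow_dvd_pow_of_dvd hxy n))
    (fun x hx => h.exists_dvd_pow harch ha0 hx)
  have hsq : ∀ x ∈ maximalIdeal R, ∃ t ∈ maximalIdeal R, t ^ 2 ∣ x := by
    intro x hx
    obtain ⟨s, hs, y, hy, rfl⟩ := h.exists_mul_eq_of_not_isCountableUnionOfPrincipal hm hx
    rcases h.dvd_or_dvd s y with ⟨c, rfl⟩ | ⟨c, rfl⟩
    · exact ⟨s, hs, c, by ring⟩
    · exact ⟨y, hy, c, by ring⟩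
  obtain ⟨t, ht, hta⟩ := exists_pow_succ_dvd_of_forall_exists_sq_dvd hsq n a ha
  exact ha0 (eq_zero_of_pow_succ_dvd_of_dvd_pow ht hta (hn t ht))

theorem isCountableUnionOfPrincipal (h : IsChainRing R) (harch : IsArchimedeanLocal R)
    (I : Ideal R) : I.IsCountableUnionOfPrincipal := by
  by_contra hI
  obtain ⟨ε, hε⟩ := h.maximalIdeal_isCountableUnionOfPrincipal harch
  obtain ⟨a, haI, ha0⟩ := Ideal.exists_mem_ne_zero_of_not_isCountableUnionOfPrincipal hI
  obtain ⟨n, hn⟩ : ∃ n, I ≤ Ideal.span {ε n} * I := by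
    refine h.exists_subset_of_not_isCountableUnionOfPrincipal hI
      (S := fun n => (Ideal.span {ε n} * I : Ideal R)) (fun n x y hx hxy => Ideal.mem_of_dvd _ hxy hx)
      fun x hx => ?_
    obtain ⟨s, hs, y, hy, rfl⟩ := h.exists_mul_eq_of_not_isCountableUnionOfPrincipal hI hx
    obtain ⟨n, c, rfl⟩ := (hε s).mp hs
    exact ⟨n, Ideal.mul_mem_mul (Ideal.mem_span_singleton.mpr (dvd_mul_right _ _)) hy⟩
  set e := ε n
  have he : e ∈ maximalIdeal R := (hε e).mpr ⟨n, dvd_rfl⟩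
  have hpow : ∀ k, I ≤ Ideal.span {e ^ k} := by
    intro k
    induction k with
    | zero => simp
    | succ k ih =>
      calc I ≤ Ideal.span {e} * I := hn
        _ ≤ Ideal.span {e} * Ideal.span {e ^ k} := Ideal.mul_mono_right ih
        _ = Ideal.span {e ^ (k + 1)} := by rw [Ideal.span_singleton_mul_span_singleton, pow_succ']
  obtain ⟨k, hk⟩ := h.exists_dvd_pow harch ha0 he
  exact ha0 (eq_zero_of_pow_succ_dvd_of_dvd_pow he (Ideal.mem_span_singleton.mp (hpow (k + 1) haI)) hk)

end Local

end IsChainRing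

theorem dvd_of_le_of_forall_succ_dvd {M : Type*} [Monoid M] {b : ℕ → M}
    (hb : ∀ n, b (n + 1) ∣ b n) {n m : ℕ} (h : n ≤ m) : b m ∣ b n := by
  induction h with
  | refl => rfl
  | step _ ih => exact (hb _).trans ih

theorem IsChainRing.exists_annOf_eq_span_singleton {R : Type u} [CommRing R] (h : IsChainRing R)
    (hcoh : IsCoherentRing R) (a : R) : ∃ c, annOf R a = Ideal.span {c} := by
  let f := LinearMap.toSpanSingleton R R a
  have : Module.FinitePresentation R (LinearMap.range f) :=
    hcoh _ (Module.Finite.iff_fg.mp inferInstance)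
  refine h.exists_eq_span_singleton_of_fg ?_
  rw [annOf, ← LinearMap.ker_rangeRestrict]
  exact Module.FinitePresentation.fg_ker _ f.surjective_rangeRestrict

section Modules

variable {R Y : Type u} [CommRing R] [AddCommGroup Y] [Module R Y]

theorem Module.Injective.exists_smul_eq (hY : Module.Injective R Y) {a : R} {y : Y}
    (h : annOf R a ≤ annOf R y) : ∃ u : Y, a • u = y := by
  let f := LinearMap.toSpanSingleton R R a
  have hker : LinearMap.ker f ≤ LinearMap.ker (LinearMap.toSpanSingleton R Y y) := h
  obtain ⟨ψ, hψ⟩ := Module.Baer.of_injective hY (LinearMap.range f)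
    ((LinearMap.ker f).liftQ _ hker ∘ₗ f.quotKerEquivRange.symm.toLinearMap)
  have hf : f 1 = a := one_smul R a
  refine ⟨ψ 1, ?_⟩
  rw [← map_smul, smul_eq_mul, mul_one, ← hf, hψ (f 1) (LinearMap.mem_range_self f 1), LinearMap.comp_apply,
    LinearEquiv.coe_coe, f.quotKerEquivRange_symm_apply_image, Submodule.mkQ_apply, Submodule.liftQ_apply]
  exact one_smul R y

theorem smul_eq_smul_of_le {b : ℕ → R} {y : ℕ → Y} (hb : ∀ n, b (n + 1) ∣ b n)
    (hy : ∀ n, b n • y (n + 1) = b n • y n) {n m : ℕ} (hnm : n ≤ m) {x : R} (hx : b n ∣ x) :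
    x • y m = x • y n := by
  induction m, hnm using Nat.le_induction with
  | base => rfl
  | succ m hnm ih =>
    obtain ⟨c, rfl⟩ := (dvd_of_le_of_forall_succ_dvd hb hnm).trans hx
    rw [← ih, mul_comm, mul_smul, mul_smul, hy]

theorem Module.Injective.exists_smul_eq_smul_of_dvd_chain (hY : Module.Injective R Y)
    {I : Ideal R} {b : ℕ → R} (hb : ∀ n, b (n + 1) ∣ b n) (hI : ∀ x, x ∈ I ↔ ∃ n, b n ∣ x)
    {y : ℕ → Y} (hy : ∀ n, b n • y (n + 1) = b n • y n) : ∃ u : Y, ∀ n, b n • u = b n • y n := by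
  choose N hN using fun x : I => (hI x).mp x.2
  have key : ∀ (x : I) n, b n ∣ (x : R) → (x : R) • y (N x) = (x : R) • y n := by
    intro x n hn
    rcases le_total (N x) n with hle | hle
    · exact (smul_eq_smul_of_le hb hy hle (hN x)).symm
    · exact smul_eq_smul_of_le hb hy hle hn
  let g : I →ₗ[R] Y :=
    { toFun := fun x => (x : R) • y (N x)
      map_add' := fun x x' => by
        have hx := (dvd_of_le_of_forall_succ_dvd hb (le_max_left (N x) (N x'))).trans (hN x)
        have hx' := (dvd_of_le_of_forall_succ_dvd hb (le_max_right (N x) (N x'))).trans (hN x')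
        change ((x + x' : I) : R) • y (N (x + x')) = (x : R) • y (N x) + (x' : R) • y (N x')
        rw [key (x + x') _ (dvd_add hx hx'), key x _ hx, key x' _ hx', Submodule.coe_add, add_smul]
      map_smul' := fun r x => by
        change ((r • x : I) : R) • y (N (r • x)) = r • ((x : R) • y (N x))
        rw [key (r • x) (N x) (dvd_mul_of_dvd_right (hN x) r), Submodule.coe_smul, smul_eq_mul,
          mul_smul] }
  obtain ⟨ψ, hψ⟩ := Module.Baer.of_injective hY I g
  refine ⟨ψ 1, fun n => ?_⟩
  rw [← map_smul, smul_eq_mul, mul_one, hψ (b n) ((hI _).mpr ⟨n, dvd_rfl⟩)]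
  exact key _ n dvd_rfl

namespace IsPureSubmodule

variable {X : Submodule R Y}

theorem exists_smul_eq_smul (hX : IsPureSubmodule X) {r : R} {y : Y} (h : r • y ∈ X) :
    ∃ x ∈ X, r • x = r • y := by
  have hr : r • y ∈ (Ideal.span {r} • (⊤ : Submodule R Y)) ⊓ X :=
    ⟨Submodule.smul_mem_smul (Ideal.mem_span_singleton_self r) Submodule.mem_top, h⟩
  rw [hX _ (Submodule.fg_span_singleton r), Submodule.ideal_span_singleton_smul] at hr
  exact Submodule.mem_map.mp hr

theorem exists_smul_eq_of_annOf_le (hX : IsPureSubmodule X) (hchain : IsChainRing R)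
    (hcoh : IsCoherentRing R) (hY : Module.Injective R Y) {a : R} {w : Y ⧸ X}
    (h : annOf R a ≤ annOf R w) : ∃ z, a • z = w := by
  obtain ⟨b, hab⟩ := hchain.exists_annOf_eq_span_singleton hcoh a
  obtain ⟨y, rfl⟩ := X.mkQ_surjective w
  have hby : b • y ∈ X := by
    rw [← Submodule.Quotient.mk_eq_zero, Submodule.Quotient.mk_smul]
    exact h (hab ▸ Ideal.mem_span_singleton_self b)
  obtain ⟨x, hxX, hbx⟩ := hX.exists_smul_eq_smul hby
  obtain ⟨u, hu⟩ := hY.exists_smul_eq (a := a) (y := y - x) <| by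
    rw [hab, Ideal.span_singleton_le_iff_mem, mem_annOf, smul_sub, hbx, sub_self]
  refine ⟨X.mkQ u, ?_⟩
  rw [← map_smul, hu, map_sub, sub_eq_self, Submodule.mkQ_apply, Submodule.Quotient.mk_eq_zero]
  exact hxX

theorem exists_lift_of_smul_succ_eq (hX : IsPureSubmodule X) {b : ℕ → R} {z : ℕ → Y ⧸ X}
    (hz : ∀ n, b n • z (n + 1) = b n • z n) :
    ∃ y : ℕ → Y, (∀ n, X.mkQ (y n) = z n) ∧ ∀ n, b n • y (n + 1) = b n • y n := by
  choose v hv using fun n => X.mkQ_surjective (z n)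
  have hdiff : ∀ n, b n • (v (n + 1) - v n) ∈ X := fun n => by
    rw [← Submodule.Quotient.mk_eq_zero, Submodule.Quotient.mk_smul, Submodule.Quotient.mk_sub]
    simp only [← Submodule.mkQ_apply, hv, smul_sub, hz, sub_self]
  choose x hxX hx using fun n => hX.exists_smul_eq_smul (hdiff n)
  -- subtracting the partial sums of the corrections `x i ∈ X` telescopes the defects away
  refine ⟨fun n => v n - ∑ i ∈ Finset.range n, x i, fun n => ?_, fun n => ?_⟩
  · rw [map_sub, hv, Submodule.mkQ_apply,
      (Submodule.Quotient.mk_eq_zero X).mpr (X.sum_mem fun i _ => hxX i), sub_zero]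
  · beta_reduce
    rw [← sub_eq_zero, ← smul_sub, Finset.sum_range_succ,
      show ∀ s : Y, v (n + 1) - (s + x n) - (v n - s) = (v (n + 1) - v n) - x n by
        intro s; abel,
      smul_sub, hx, sub_self]

end IsPureSubmodule

end Modules

theorem LinearMap.apply_eq_smul_of_eq_mul {R M : Type u} [CommRing R] [AddCommGroup M]
    [Module R M] {I : Ideal R} (f : I →ₗ[R] M) {a x c : R} (ha : a ∈ I) (hx : x ∈ I)
    (h : x = a * c) : f ⟨x, hx⟩ = c • f ⟨a, ha⟩ := by
  subst h
  rw [← map_smul]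
  exact congrArg f (Subtype.ext (mul_comm a c))

theorem stmt3 (R : Type u) [CommRing R] [IsLocalRing R]
    (hchain : IsChainRing R) (harch : IsArchimedeanLocal R) (hcoh : IsCoherentRing R)
    (Y : Type u) [AddCommGroup Y] [Module R Y] (hY : Module.Injective R Y)
    (X : Submodule R Y) (hX : IsPureSubmodule X) :
    Module.Injective R (Y ⧸ X) := by
  refine Module.Baer.injective fun I f => ?_
  obtain ⟨b, hb, hI⟩ := hchain.exists_dvd_chain (hchain.isCountableUnionOfPrincipal harch I)
  have hbI : ∀ n, b n ∈ I := fun n => (hI _).mpr ⟨n, dvd_rfl⟩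
  choose z hz using fun n => hX.exists_smul_eq_of_annOf_le hchain hcoh hY
    (a := b n) (w := f ⟨b n, hbI n⟩) fun r hr => by
      rw [mem_annOf, ← map_smul, show r • (⟨b n, hbI n⟩ : I) = 0 from Subtype.ext hr, map_zero]
  have hzc : ∀ n, b n • z (n + 1) = b n • z n := fun n => by
    obtain ⟨c, hc⟩ := hb n
    rw [hz n, f.apply_eq_smul_of_eq_mul (hbI (n + 1)) (hbI n) hc, ← hz, ← mul_smul, mul_comm, ← hc]
  obtain ⟨y, hyz, hy⟩ := hX.exists_lift_of_smul_succ_eq hzc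
  obtain ⟨u, hu⟩ := hY.exists_smul_eq_smul_of_dvd_chain hb hI hy
  refine ⟨LinearMap.toSpanSingleton R _ (X.mkQ u), fun x hx => ?_⟩
  obtain ⟨n, c, hc⟩ := (hI x).mp hx
  calc x • X.mkQ u = c • X.mkQ (b n • y n) := by rw [← hu, map_smul, hc, mul_comm, mul_smul]
    _ = f ⟨x, hx⟩ := by rw [map_smul, hyz, hz, f.apply_eq_smul_of_eq_mul (hbI n) hx hc]
end

section
/- Let R be a valuation ring and I a nonzero proper ideal of R. Then I^♯ = {r in R : rI ⊂ I} (strict inclusion) is a prime ideal of R. -/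
open IsLocalRing

universe u

/-!
Since `(r) * I ≤ I` always, `r ∈ I^♯` just says `(r) * I ≠ I`; hence `xy ∉ I^♯` as soon as
`x, y ∉ I^♯`, because `(xy) * I = (x) * ((y) * I)`. Closure under addition is where the chain
condition enters: `(a + b) * I ≤ (a) * I ⊔ (b) * I`, and the larger of the two is already
strictly below `I`.
-/

namespace Ideal

variable {R : Type u} [CommRing R] {I : Ideal R}

theorem span_singleton_mul_lt_iff_ne {r : R} : span {r} * I < I ↔ span {r} * I ≠ I :=
  mul_le_right.lt_iff_ne

theorem span_zero_mul_lt (hI : I ≠ ⊥) : span {(0 : R)} * I < I := by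
  rwa [span_singleton_eq_bot.mpr rfl, bot_mul, bot_lt_iff_ne_bot]

theorem not_span_one_mul_lt : ¬ span {(1 : R)} * I < I := by
  rw [span_singleton_one, top_mul]
  exact lt_irrefl I

theorem span_mul_mul_lt (c : R) {a : R} (ha : span {a} * I < I) : span {c * a} * I < I :=
  (mul_mono_left (span_singleton_le_span_singleton.mpr (dvd_mul_left a c))).trans_lt ha

theorem span_add_mul_lt (hchain : IsChainRing R) {a b : R} (ha : span {a} * I < I)
    (hb : span {b} * I < I) : span {a + b} * I < I := by
  have hsum : span {a + b} * I ≤ span {a} * I ⊔ span {b} * I := by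
    rw [← sup_mul]
    exact mul_mono_left (span_singleton_le_iff_mem _ |>.mpr
      (Submodule.add_mem_sup (mem_span_singleton_self a) (mem_span_singleton_self b)))
  rcases hchain (span {a} * I) (span {b} * I) with hab | hba
  · exact (hsum.trans (sup_le hab le_rfl)).trans_lt hb
  · exact (hsum.trans (sup_le le_rfl hba)).trans_lt ha

theorem span_mul_lt_or_span_mul_lt {x y : R} (hxy : span {x * y} * I < I) :
    span {x} * I < I ∨ span {y} * I < I := by
  simp only [span_singleton_mul_lt_iff_ne] at hxy ⊢
  contrapose! hxy
  rw [← span_singleton_mul_span_singleton, mul_assoc, hxy.2, hxy.1]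

/-- The ideal `I^♯`. -/
def sharp (hchain : IsChainRing R) (hI : I ≠ ⊥) : Ideal R where
  carrier := {r | span {r} * I < I}
  add_mem' := span_add_mul_lt hchain
  zero_mem' := span_zero_mul_lt hI
  smul_mem' := span_mul_mul_lt

theorem sharp_isPrime (hchain : IsChainRing R) (hI : I ≠ ⊥) : (sharp hchain hI).IsPrime where
  ne_top' h := not_span_one_mul_lt ((eq_top_iff_one _).mp h)
  mem_or_mem' := span_mul_lt_or_span_mul_lt

end Ideal

theorem stmt9_general (R : Type u) [CommRing R] (hchain : IsChainRing R)
    (I : Ideal R) (hI0 : I ≠ ⊥) :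
    ∃ J : Ideal R, (↑J : Set R) = {r : R | Ideal.span {r} * I < I} ∧ J.IsPrime :=
  ⟨Ideal.sharp hchain hI0, rfl, Ideal.sharp_isPrime hchain hI0⟩

theorem stmt9 (R : Type u) [CommRing R] [IsLocalRing R] (hchain : IsChainRing R)
    (I : Ideal R) (hI0 : I ≠ ⊥) (hI1 : I ≠ ⊤) :
    ∃ J : Ideal R, (↑J : Set R) = {r : R | Ideal.span {r} * I < I} ∧ J.IsPrime :=
  stmt9_general R hchain I hI0
end
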